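/- There exists a constant C > 0 such that |J_m(t)| ≤ C · t^{−1/3} for every integer m ∈ ℤ and every real t ≥ 1. -/

import Mathlib

/-!
`J_m(t)` is `1/2π` times the oscillatory integral of `e^{iφ}` over `[0, 2π]`, with phase
`φ(k) = -(m k + t sin k)` and `φ''(k) = t sin k`. Outside the `δ`-neighbourhoods of `0, π, 2π`
we have `|φ''| ≥ t sin δ`, so van der Corput's second-derivative test bounds the integral there by
`O((t sin δ)^{-1/2}) = O((t δ)^{-1/2})`, uniformly in `m`; the neighbourhoods contribute `O(δ)`.
The choice `δ = t^{-1/3}` balances the two.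

The second-derivative test itself: if `φ'' ≥ κ > 0`, then `φ'` grows at rate `κ`, so
`|φ'| ≥ √κ` outside an interval of length `2/√κ`, and there one integration by parts
(the first-derivative test) gives `O(1/√κ)`.
-/

open MeasureTheory

/-- The Bessel function `J_m(t) = (1/2π)∫₀^{2π} e^{-imk - i t sin k} dk` for `m ∈ ℤ`. -/
noncomputable def besselJ (m : ℤ) (t : ℝ) : ℂ :=
  (1 / (2 * Real.pi)) * ∫ k in (0:ℝ)..(2 * Real.pi),
    Complex.exp (-Complex.I * m * k - Complex.I * t * Real.sin k)

open Set intervalIntegral Complex ComplexConjugate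

theorem norm_integral_le_add_adjacent_intervals {E : Type*} [NormedAddCommGroup E]
    [NormedSpace ℝ E] {f : ℝ → E} {a b c : ℝ} (hab : IntervalIntegrable f volume a b)
    (hbc : IntervalIntegrable f volume b c) :
    ‖∫ x in a..c, f x‖ ≤ ‖∫ x in a..b, f x‖ + ‖∫ x in b..c, f x‖ := by
  rw [← integral_add_adjacent_intervals hab hbc]
  exact norm_add_le _ _

theorem mul_sub_le_sub_of_le_hasDerivAt {f f' : ℝ → ℝ} {a b C : ℝ}
    (hf : ∀ x ∈ Icc a b, HasDerivAt f (f' x) x) (hC : ∀ x ∈ Icc a b, C ≤ f' x)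
    {x y : ℝ} (hx : x ∈ Icc a b) (hy : y ∈ Icc a b) (hxy : x ≤ y) : C * (y - x) ≤ f y - f x :=
  (convex_Icc a b).mul_sub_le_image_sub_of_le_deriv
    (fun z hz => (hf z hz).continuousAt.continuousWithinAt)
    (fun z hz => (hf z (interior_subset hz)).differentiableAt.differentiableWithinAt)
    (fun z hz => (hf z (interior_subset hz)).deriv ▸ hC z (interior_subset hz)) x hx y hy hxy

theorem Real.sin_le_sin_of_mem_Icc {δ k : ℝ} (hδ : 0 ≤ δ) (hk : k ∈ Icc δ (Real.pi - δ)) :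
    sin δ ≤ sin k := by
  have hsin : 0 ≤ sin ((k - δ) / 2) :=
    sin_nonneg_of_nonneg_of_le_pi (by linarith [hk.1]) (by linarith [hk.2, pi_pos])
  have hcos : 0 ≤ cos ((k + δ) / 2) :=
    cos_nonneg_of_mem_Icc ⟨by linarith [hk.1, pi_pos], by linarith [hk.2]⟩
  nlinarith [sin_sub_sin k δ, mul_nonneg hsin hcos]

section OscillatoryIntegral

variable {φ φ' φ'' : ℝ → ℝ} {a b : ℝ}

theorem hasDerivAt_exp_mul_I {d x : ℝ} (h : HasDerivAt φ d x) :
    HasDerivAt (fun y => exp (φ y * I)) (exp (φ x * I) * (d * I)) x :=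
  (h.ofReal_comp.mul_const I).cexp

theorem norm_integral_exp_mul_I_le_sub (φ : ℝ → ℝ) (hab : a ≤ b) :
    ‖∫ x in a..b, exp (φ x * I)‖ ≤ b - a := by
  simpa [abs_of_nonneg (sub_nonneg.2 hab)] using
    norm_integral_le_of_norm_le_const (C := 1) (a := a) (b := b)
      fun x _ => (norm_exp_ofReal_mul_I (φ x)).le

theorem norm_integral_exp_neg_mul_I (φ : ℝ → ℝ) (a b : ℝ) :
    ‖∫ x in a..b, exp ((-φ x : ℝ) * I)‖ = ‖∫ x in a..b, exp (φ x * I)‖ := by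
  have hconj (x : ℝ) : exp ((-φ x : ℝ) * I) = conj (exp (φ x * I)) := by
    rw [← exp_conj, map_mul, conj_ofReal, conj_I, ofReal_neg, neg_mul, mul_neg]
  simp_rw [hconj, intervalIntegral, integral_conj, ← map_sub, RCLike.norm_conj]

/-- Integration by parts against `1 / (i φ')`, whose derivative is `i φ'' / φ'²`. -/
theorem integral_exp_mul_I_eq_of_deriv_ne_zero
    (hφ : ∀ x ∈ uIcc a b, HasDerivAt φ (φ' x) x) (hφ' : ∀ x ∈ uIcc a b, HasDerivAt φ' (φ'' x) x)
    (hne : ∀ x ∈ uIcc a b, φ' x ≠ 0)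
    (hint : IntervalIntegrable (fun x => φ'' x / φ' x ^ 2) volume a b) :
    ∫ x in a..b, exp (φ x * I) =
      ((φ' b : ℂ) * I)⁻¹ * exp (φ b * I) - ((φ' a : ℂ) * I)⁻¹ * exp (φ a * I)
        - ∫ x in a..b, ((φ'' x / φ' x ^ 2 : ℝ) : ℂ) * I * exp (φ x * I) := by
  have hu (x : ℝ) (hx : x ∈ uIcc a b) :
      HasDerivAt (fun y => ((φ' y : ℂ) * I)⁻¹) (((φ'' x / φ' x ^ 2 : ℝ) : ℂ) * I) x := by
    have hx' : (φ' x : ℂ) ≠ 0 := ofReal_ne_zero.2 (hne x hx)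
    refine (((hφ' x hx).ofReal_comp.mul_const I).inv (mul_ne_zero hx' I_ne_zero)).congr_deriv ?_
    push_cast
    field_simp
    simp [pow_two, I_mul_I]
  have hv (x : ℝ) (hx : x ∈ uIcc a b) := hasDerivAt_exp_mul_I (hφ x hx)
  have hv_int : IntervalIntegrable (fun x => exp (φ x * I) * (φ' x * I)) volume a b :=
    ContinuousOn.intervalIntegrable fun x hx => ContinuousAt.continuousWithinAt <|
      (hv x hx).continuousAt.mul
        ((continuous_ofReal.continuousAt.comp (hφ' x hx).continuousAt).mul continuousAt_const)
  rw [← integral_mul_deriv_eq_deriv_mul hu hv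
    (IntervalIntegrable.mul_const ⟨hint.1.ofReal, hint.2.ofReal⟩ I) hv_int]
  refine integral_congr fun x hx => ?_
  have hx' : (φ' x : ℂ) ≠ 0 := ofReal_ne_zero.2 (hne x hx)
  field_simp

/-- The first-derivative test. -/
theorem norm_integral_exp_mul_I_le_of_le_deriv {μ : ℝ} (hab : a ≤ b) (hμ : 0 < μ)
    (hφ : ∀ x ∈ Icc a b, HasDerivAt φ (φ' x) x) (hφ' : ∀ x ∈ Icc a b, HasDerivAt φ' (φ'' x) x)
    (hμφ' : ∀ x ∈ Icc a b, μ ≤ φ' x) (hφ'' : ∀ x ∈ Icc a b, 0 ≤ φ'' x) :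
    ‖∫ x in a..b, exp (φ x * I)‖ ≤ 2 / μ := by
  rw [← uIcc_of_le hab] at hφ hφ' hμφ' hφ''
  have hpos (x : ℝ) (hx : x ∈ uIcc a b) : 0 < φ' x := hμ.trans_le (hμφ' x hx)
  have hr (x : ℝ) (hx : x ∈ uIcc a b) :
      HasDerivAt (fun y => -(φ' y)⁻¹) (φ'' x / φ' x ^ 2) x :=
    ((hφ' x hx).inv (hpos x hx).ne').neg.congr_deriv (by ring)
  have hr_int : IntervalIntegrable (fun x => φ'' x / φ' x ^ 2) volume a b :=
    intervalIntegrable_deriv_of_nonneg (fun x hx => (hr x hx).continuousAt.continuousWithinAt)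
      (fun x hx => hr x (Ioo_subset_Icc_self hx))
      (fun x hx => div_nonneg (hφ'' x (Ioo_subset_Icc_self hx)) (sq_nonneg _))
  have hrem : ‖∫ x in a..b, ((φ'' x / φ' x ^ 2 : ℝ) : ℂ) * I * exp (φ x * I)‖
      ≤ (φ' a)⁻¹ - (φ' b)⁻¹ := by
    have hr_eq := integral_eq_sub_of_hasDerivAt hr hr_int
    rw [sub_neg_eq_add, neg_add_eq_sub] at hr_eq
    rw [← hr_eq]
    refine norm_integral_le_of_norm_le hab (ae_of_all _ fun x hx => ?_) hr_int
    have hx : x ∈ uIcc a b := by rw [uIcc_of_le hab]; exact Ioc_subset_Icc_self hx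
    simp [norm_exp_ofReal_mul_I, abs_of_nonneg (hφ'' x hx)]
  have hboundary (x : ℝ) (hx : x ∈ uIcc a b) : ‖((φ' x : ℂ) * I)⁻¹ * exp (φ x * I)‖ = (φ' x)⁻¹ := by
    simp [norm_exp_ofReal_mul_I, abs_of_pos (hpos x hx)]
  have hμa : (φ' a)⁻¹ ≤ μ⁻¹ := inv_anti₀ hμ (hμφ' a left_mem_uIcc)
  rw [integral_exp_mul_I_eq_of_deriv_ne_zero hφ hφ' (fun x hx => (hpos x hx).ne') hr_int]
  grw [norm_sub_le, norm_sub_le, hboundary b right_mem_uIcc, hboundary a left_mem_uIcc, hrem]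
  rw [div_eq_mul_inv]
  linarith

theorem norm_integral_exp_mul_I_le_of_le_deriv2_of_deriv_left_nonneg {κ : ℝ} (hab : a ≤ b)
    (hκ : 0 < κ) (hφ : ∀ x ∈ Icc a b, HasDerivAt φ (φ' x) x)
    (hφ' : ∀ x ∈ Icc a b, HasDerivAt φ' (φ'' x) x) (hκφ'' : ∀ x ∈ Icc a b, κ ≤ φ'' x)
    (ha : 0 ≤ φ' a) :
    ‖∫ x in a..b, exp (φ x * I)‖ ≤ 3 / √κ := by
  have hs : 0 < √κ := Real.sqrt_pos.2 hκ
  rcases le_or_gt b (a + 1 / √κ) with hb | hb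
  · calc ‖∫ x in a..b, exp (φ x * I)‖ ≤ b - a := norm_integral_exp_mul_I_le_sub φ hab
      _ ≤ 3 / √κ := by linarith [div_le_div_of_nonneg_right (by norm_num : (1:ℝ) ≤ 3) hs.le]
  set d := a + 1 / √κ
  have had : a ≤ d := by simp only [d]; linarith [one_div_pos.2 hs]
  have hd : d ∈ Icc a b := ⟨had, hb.le⟩
  have hdb (x : ℝ) (hx : x ∈ Icc d b) : x ∈ Icc a b := ⟨had.trans hx.1, hx.2⟩
  have hsφ' (x : ℝ) (hx : x ∈ Icc d b) : √κ ≤ φ' x := by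
    have hgrowth := mul_sub_le_sub_of_le_hasDerivAt hφ' hκφ'' (left_mem_Icc.2 hab) (hdb x hx)
      (had.trans hx.1)
    have : √κ ≤ κ * (x - a) :=
      calc √κ = κ * (1 / √κ) := by rw [mul_one_div, Real.div_sqrt]
        _ ≤ κ * (x - a) := by gcongr; linarith [hx.1]
    linarith
  have hcont : ContinuousOn (fun x => exp (φ x * I)) (Icc a b) :=
    fun x hx => (hasDerivAt_exp_mul_I (hφ x hx)).continuousAt.continuousWithinAt
  calc ‖∫ x in a..b, exp (φ x * I)‖
      ≤ ‖∫ x in a..d, exp (φ x * I)‖ + ‖∫ x in d..b, exp (φ x * I)‖ :=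
        norm_integral_le_add_adjacent_intervals
          (hcont.mono (uIcc_subset_Icc (left_mem_Icc.2 hab) hd)).intervalIntegrable
          (hcont.mono (uIcc_subset_Icc hd (right_mem_Icc.2 hab))).intervalIntegrable
    _ ≤ (d - a) + 2 / √κ := by
        gcongr
        · exact norm_integral_exp_mul_I_le_sub φ had
        · exact norm_integral_exp_mul_I_le_of_le_deriv hb.le hs (fun x hx => hφ x (hdb x hx))
            (fun x hx => hφ' x (hdb x hx)) hsφ' (fun x hx => hκ.le.trans (hκφ'' x (hdb x hx)))
    _ = 3 / √κ := by simp only [d]; ring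

theorem norm_integral_exp_mul_I_le_of_le_deriv2_of_deriv_right_nonpos {κ : ℝ} (hab : a ≤ b)
    (hκ : 0 < κ) (hφ : ∀ x ∈ Icc a b, HasDerivAt φ (φ' x) x)
    (hφ' : ∀ x ∈ Icc a b, HasDerivAt φ' (φ'' x) x) (hκφ'' : ∀ x ∈ Icc a b, κ ≤ φ'' x)
    (hb : φ' b ≤ 0) :
    ‖∫ x in a..b, exp (φ x * I)‖ ≤ 3 / √κ := by
  -- the reflection `x ↦ -x` keeps `φ''` and turns `φ' b ≤ 0` into a nonnegative left value
  have hneg (x : ℝ) (hx : x ∈ Icc (-b) (-a)) : -x ∈ Icc a b := ⟨le_neg.1 hx.2, neg_le.1 hx.1⟩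
  have h := norm_integral_exp_mul_I_le_of_le_deriv2_of_deriv_left_nonneg (φ := fun x => φ (-x))
    (φ' := fun x => -φ' (-x)) (φ'' := fun x => φ'' (-x)) (neg_le_neg hab) hκ
    (fun x hx => by
      simpa [Function.comp_def] using (hφ (-x) (hneg x hx)).comp x (hasDerivAt_neg x))
    (fun x hx => by
      simpa [Function.comp_def] using ((hφ' (-x) (hneg x hx)).comp x (hasDerivAt_neg x)).fun_neg)
    (fun x hx => hκφ'' (-x) (hneg x hx)) (by simpa using hb)
  rwa [integral_comp_neg (fun x => exp (φ x * I)), neg_neg, neg_neg] at h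

/-- Van der Corput's second-derivative test. -/
theorem norm_integral_exp_mul_I_le_of_le_deriv2 {κ : ℝ} (hab : a ≤ b) (hκ : 0 < κ)
    (hφ : ∀ x ∈ Icc a b, HasDerivAt φ (φ' x) x) (hφ' : ∀ x ∈ Icc a b, HasDerivAt φ' (φ'' x) x)
    (hκφ'' : ∀ x ∈ Icc a b, κ ≤ φ'' x) :
    ‖∫ x in a..b, exp (φ x * I)‖ ≤ 6 / √κ := by
  have h36 : 3 / √κ ≤ 6 / √κ := by gcongr; norm_num
  rcases le_or_gt 0 (φ' a) with ha | ha
  · exact (norm_integral_exp_mul_I_le_of_le_deriv2_of_deriv_left_nonneg hab hκ hφ hφ' hκφ''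
      ha).trans h36
  rcases le_or_gt (φ' b) 0 with hb | hb
  · exact (norm_integral_exp_mul_I_le_of_le_deriv2_of_deriv_right_nonpos hab hκ hφ hφ' hκφ''
      hb).trans h36
  obtain ⟨c, hc, hφ'c⟩ : ∃ c ∈ Icc a b, φ' c = 0 :=
    intermediate_value_Icc hab (fun x hx => (hφ' x hx).continuousAt.continuousWithinAt)
      ⟨ha.le, hb.le⟩
  have hcont : ContinuousOn (fun x => exp (φ x * I)) (Icc a b) :=
    fun x hx => (hasDerivAt_exp_mul_I (hφ x hx)).continuousAt.continuousWithinAt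
  have hac (x : ℝ) (hx : x ∈ Icc a c) : x ∈ Icc a b := ⟨hx.1, hx.2.trans hc.2⟩
  have hcb (x : ℝ) (hx : x ∈ Icc c b) : x ∈ Icc a b := ⟨hc.1.trans hx.1, hx.2⟩
  calc ‖∫ x in a..b, exp (φ x * I)‖
      ≤ ‖∫ x in a..c, exp (φ x * I)‖ + ‖∫ x in c..b, exp (φ x * I)‖ :=
        norm_integral_le_add_adjacent_intervals
          (hcont.mono (uIcc_subset_Icc (left_mem_Icc.2 hab) hc)).intervalIntegrable
          (hcont.mono (uIcc_subset_Icc hc (right_mem_Icc.2 hab))).intervalIntegrable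
    _ ≤ 3 / √κ + 3 / √κ := by
        gcongr
        · exact norm_integral_exp_mul_I_le_of_le_deriv2_of_deriv_right_nonpos hc.1 hκ
            (fun x hx => hφ x (hac x hx)) (fun x hx => hφ' x (hac x hx))
            (fun x hx => hκφ'' x (hac x hx)) hφ'c.le
        · exact norm_integral_exp_mul_I_le_of_le_deriv2_of_deriv_left_nonneg hc.2 hκ
            (fun x hx => hφ x (hcb x hx)) (fun x hx => hφ' x (hcb x hx))
            (fun x hx => hκφ'' x (hcb x hx)) hφ'c.ge
    _ = 6 / √κ := by ring

theorem norm_integral_exp_mul_I_le_of_deriv2_le_neg {κ : ℝ} (hab : a ≤ b) (hκ : 0 < κ)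
    (hφ : ∀ x ∈ Icc a b, HasDerivAt φ (φ' x) x) (hφ' : ∀ x ∈ Icc a b, HasDerivAt φ' (φ'' x) x)
    (hκφ'' : ∀ x ∈ Icc a b, φ'' x ≤ -κ) :
    ‖∫ x in a..b, exp (φ x * I)‖ ≤ 6 / √κ := by
  rw [← norm_integral_exp_neg_mul_I]
  exact norm_integral_exp_mul_I_le_of_le_deriv2 hab hκ (fun x hx => (hφ x hx).neg)
    (fun x hx => (hφ' x hx).neg) (fun x hx => le_neg.1 (hκφ'' x hx))

end OscillatoryIntegral

noncomputable def besselPhase (m : ℤ) (t k : ℝ) : ℝ := -(m * k + t * Real.sin k)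

theorem hasDerivAt_besselPhase (m : ℤ) (t k : ℝ) :
    HasDerivAt (besselPhase m t) (-(m + t * Real.cos k)) k :=
  (((hasDerivAt_id k).const_mul (m : ℝ)).add ((Real.hasDerivAt_sin k).const_mul t)).neg.congr_deriv
    (by simp)

theorem hasDerivAt_deriv_besselPhase (m : ℤ) (t k : ℝ) :
    HasDerivAt (fun k => -(m + t * Real.cos k)) (t * Real.sin k) k :=
  (((Real.hasDerivAt_cos k).const_mul t).const_add (m : ℝ)).neg.congr_deriv (by ring)

theorem besselJ_eq_integral_exp_besselPhase (m : ℤ) (t : ℝ) :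
    besselJ m t = (1 / (2 * Real.pi)) *
      ∫ k in (0:ℝ)..(2 * Real.pi), exp (besselPhase m t k * I) := by
  unfold besselJ besselPhase
  congr 2 with k
  push_cast
  ring_nf

theorem norm_integral_exp_besselPhase_le (m : ℤ) {t δ : ℝ} (ht : 0 < t) (hδ : 0 < δ)
    (hδπ : δ ≤ Real.pi / 2) :
    ‖∫ k in (0:ℝ)..(2 * Real.pi), exp (besselPhase m t k * I)‖
      ≤ 4 * δ + 12 / √(t * Real.sin δ) := by
  have hκ : 0 < t * Real.sin δ :=
    mul_pos ht (Real.sin_pos_of_pos_of_lt_pi hδ (by linarith [Real.pi_pos]))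
  have hint (a b : ℝ) : IntervalIntegrable (fun k => exp (besselPhase m t k * I)) volume a b :=
    (continuous_iff_continuousAt.2 fun k =>
      (hasDerivAt_exp_mul_I (hasDerivAt_besselPhase m t k)).continuousAt).intervalIntegrable a b
  have hsplit (a b c : ℝ) := norm_integral_le_add_adjacent_intervals (hint a b) (hint b c)
  have hπ := Real.pi_gt_three
  have h₁ := norm_integral_exp_mul_I_le_sub (besselPhase m t) hδ.le
  have h₂ : ‖∫ k in δ..(Real.pi - δ), exp (besselPhase m t k * I)‖ ≤ 6 / √(t * Real.sin δ) :=
    norm_integral_exp_mul_I_le_of_le_deriv2 (by linarith) hκ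
      (fun k _ => hasDerivAt_besselPhase m t k) (fun k _ => hasDerivAt_deriv_besselPhase m t k)
      fun k hk => mul_le_mul_of_nonneg_left (Real.sin_le_sin_of_mem_Icc hδ.le hk) ht.le
  have h₃ := norm_integral_exp_mul_I_le_sub (besselPhase m t)
    (show Real.pi - δ ≤ Real.pi + δ by linarith)
  have h₄ : ‖∫ k in (Real.pi + δ)..(2 * Real.pi - δ), exp (besselPhase m t k * I)‖
      ≤ 6 / √(t * Real.sin δ) :=
    norm_integral_exp_mul_I_le_of_deriv2_le_neg (by linarith) hκ
      (fun k _ => hasDerivAt_besselPhase m t k) (fun k _ => hasDerivAt_deriv_besselPhase m t k)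
      fun k hk => by
        have hkπ : k - Real.pi ∈ Icc δ (Real.pi - δ) := ⟨by linarith [hk.1], by linarith [hk.2]⟩
        have := mul_le_mul_of_nonneg_left (Real.sin_le_sin_of_mem_Icc hδ.le hkπ) ht.le
        rw [Real.sin_sub_pi] at this
        linarith
  have h₅ := norm_integral_exp_mul_I_le_sub (besselPhase m t)
    (show 2 * Real.pi - δ ≤ 2 * Real.pi by linarith)
  have h₆ : 12 / √(t * Real.sin δ) = 6 / √(t * Real.sin δ) + 6 / √(t * Real.sin δ) := by ring
  linarith [hsplit 0 (2 * Real.pi - δ) (2 * Real.pi), hsplit 0 (Real.pi + δ) (2 * Real.pi - δ),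
    hsplit 0 (Real.pi - δ) (Real.pi + δ), hsplit 0 δ (Real.pi - δ)]

theorem norm_integral_exp_besselPhase_le_rpow (m : ℤ) {t : ℝ} (ht : 1 ≤ t) :
    ‖∫ k in (0:ℝ)..(2 * Real.pi), exp (besselPhase m t k * I)‖ ≤ 20 * t ^ (-(1/3) : ℝ) := by
  have ht0 : 0 < t := one_pos.trans_le ht
  set δ := t ^ (-(1/3) : ℝ)
  have hδ : 0 < δ := Real.rpow_pos_of_pos ht0 _
  have hδ1 : δ ≤ 1 := Real.rpow_le_one_of_one_le_of_nonpos ht (by norm_num)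
  have htδ : t * δ ^ 3 = 1 := by
    rw [← Real.rpow_natCast, ← Real.rpow_mul ht0.le]
    norm_num
    rw [Real.rpow_neg_one, mul_inv_cancel₀ ht0.ne']
  have hπ := Real.pi_lt_d2
  have hπ' := Real.pi_gt_three
  have hsin : 2 / Real.pi * δ ≤ Real.sin δ := Real.mul_le_sin hδ.le (by linarith)
  have hsin_pos : 0 < Real.sin δ := lt_of_lt_of_le (by positivity) hsin
  have hroot : 0 < √(t * Real.sin δ) := Real.sqrt_pos.2 (mul_pos ht0 hsin_pos)
  -- Jordan's inequality `sin δ ≥ 2δ/π` gives `(δ √(t sin δ))² ≥ (2/π) t δ³ = 2/π`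
  have hsq : 9 / 16 ≤ (δ * √(t * Real.sin δ)) ^ 2 := by
    rw [mul_pow, Real.sq_sqrt (mul_pos ht0 hsin_pos).le]
    calc (9 / 16 : ℝ) ≤ 2 / Real.pi := by rw [le_div_iff₀ (by positivity)]; linarith
      _ = 2 / Real.pi * δ * (t * δ ^ 2) := by linear_combination (2 / Real.pi) * htδ.symm
      _ ≤ δ ^ 2 * (t * Real.sin δ) := by nlinarith [sq_nonneg δ]
  have hδroot : 3 / 4 ≤ δ * √(t * Real.sin δ) := by nlinarith [mul_pos hδ hroot]
  have hrem : 12 / √(t * Real.sin δ) ≤ 16 * δ := by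
    rw [div_le_iff₀ hroot]; linarith
  linarith [norm_integral_exp_besselPhase_le m ht0 hδ (by linarith)]

/-- There is a constant `C > 0` with `|J_m(t)| ≤ C t^{-1/3}` for all
integers `m` and all reals `t ≥ 1`. -/
theorem statement2 :
    ∃ C : ℝ, 0 < C ∧ ∀ (m : ℤ) (t : ℝ), 1 ≤ t →
      ‖besselJ m t‖ ≤ C * t ^ (-(1/3) : ℝ) := by
  refine ⟨20, by norm_num, fun m t ht => ?_⟩
  have hcoef : ‖(1 / (2 * Real.pi) : ℂ)‖ ≤ 1 := by
    rw [norm_div, norm_one, norm_mul, Complex.norm_ofNat, Complex.norm_real,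
      Real.norm_of_nonneg Real.pi_pos.le, div_le_one (by positivity)]
    linarith [Real.pi_gt_three]
  rw [besselJ_eq_integral_exp_besselPhase, norm_mul]
  simpa using mul_le_mul hcoef (norm_integral_exp_besselPhase_le_rpow m ht) (norm_nonneg _)
    zero_le_one
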